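/- arXiv:1910.11080 — 2 statements merged into one kernel-verified Lean document; each statement's English description precedes it below -/
import Mathlib

section
/- If a collection 𝒜 of subsets of a set X has VC-dimension d < ∞, then for every finite subset B ⊆ X, the number of distinct intersections {A ∩ B : A ∈ 𝒜} is at most ∑_{i=0}^{d} (|B| choose i). -/
/-! The traces of `𝒜` on `B` form a finite family `𝒯` of subsets of `B`, and every set shattered
by `𝒯` is shattered by `𝒜`, hence has at most `d` elements. By Pajor's inequality `𝒯` has at most
as many members as it shatters sets, and those are among the subsets of `B` of size at most `d`. -/

open Finset
open scoped ENNReal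

variable {X : Type*}

/-- `𝒜` shatters the finite set `B` if every subset of `B` is a trace of some `A ∈ 𝒜`. -/
def Shatters (𝒜 : Set (Set X)) (B : Finset X) : Prop :=
  ∀ s : Finset X, s ⊆ B → ∃ A ∈ 𝒜, A ∩ (B : Set X) = ↑s

/-- The number of distinct traces of members of `𝒜` on the finite set `B`. -/
noncomputable def traceCard (𝒜 : Set (Set X)) (B : Finset X) : ℕ :=
  Set.ncard {s : Set X | ∃ A ∈ 𝒜, s = A ∩ ↑B}

/-- The growth function: maximal number of traces on a set of size `n`. -/
noncomputable def tau (𝒜 : Set (Set X)) (n : ℕ) : ℕ :=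
  sSup {t : ℕ | ∃ B : Finset X, B.card = n ∧ traceCard 𝒜 B = t}

/-- VC dimension: supremum of sizes of shattered finite sets. -/
noncomputable def VCdim (𝒜 : Set (Set X)) : ℕ∞ :=
  ⨆ (B : Finset X) (_ : Shatters 𝒜 B), (B.card : ℕ∞)

/-- VC density: infimum of exponents `q` such that `tau 𝒜 n = O(n^q)`. -/
noncomputable def vcDensity (𝒜 : Set (Set X)) : ℝ≥0∞ :=
  sInf {q : ℝ≥0∞ | q ≠ ⊤ ∧
    ∃ C : ℝ, ∀ n : ℕ, 1 ≤ n → (tau 𝒜 n : ℝ) ≤ C * (n : ℝ) ^ q.toReal}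

theorem Finset.card_le_sum_choose_of_vcDim_le {α : Type*} [DecidableEq α]
    {𝒜 : Finset (Finset α)} {B : Finset α} {d : ℕ} (h𝒜B : ∀ t ∈ 𝒜, t ⊆ B) (hd : 𝒜.vcDim ≤ d) :
    #𝒜 ≤ ∑ k ∈ range (d + 1), (#B).choose k := by
  have hsub : 𝒜.shatterer ⊆ (range (d + 1)).biUnion (B.powersetCard ·) := fun s hs ↦ by
    have hshat := mem_shatterer.1 hs
    obtain ⟨t, ht, hst⟩ := hshat.exists_superset
    exact mem_biUnion.2 ⟨#s, mem_range_succ_iff.2 (hshat.card_le_vcDim.trans hd),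
      mem_powersetCard.2 ⟨hst.trans (h𝒜B t ht), rfl⟩⟩
  calc #𝒜 ≤ #𝒜.shatterer := card_le_card_shatterer 𝒜
    _ ≤ ∑ k ∈ range (d + 1), #(B.powersetCard k) := (card_le_card hsub).trans card_biUnion_le
    _ = ∑ k ∈ range (d + 1), (#B).choose k := by simp only [card_powersetCard]

open Classical in
noncomputable def traceFinset (𝒜 : Set (Set X)) (B : Finset X) : Finset (Finset X) :=
  B.powerset.filter fun t ↦ ∃ A ∈ 𝒜, A ∩ (B : Set X) = ↑t

lemma mem_traceFinset {𝒜 : Set (Set X)} {B t : Finset X} :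
    t ∈ traceFinset 𝒜 B ↔ t ⊆ B ∧ ∃ A ∈ 𝒜, A ∩ (B : Set X) = ↑t := by
  classical
  simp [traceFinset]

lemma traceCard_eq_card_traceFinset (𝒜 : Set (Set X)) (B : Finset X) :
    traceCard 𝒜 B = #(traceFinset 𝒜 B) := by
  classical
  have htraces :
      {s : Set X | ∃ A ∈ 𝒜, s = A ∩ ↑B} = (↑) '' (traceFinset 𝒜 B : Set (Finset X)) := by
    ext s
    simp only [Set.mem_ofPred_eq, Set.mem_image, mem_coe, mem_traceFinset]
    constructor
    · rintro ⟨A, hA, rfl⟩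
      refine ⟨B.filter (· ∈ A), ⟨filter_subset _ _, A, hA, ?_⟩, ?_⟩ <;>
        · ext x; simp [and_comm]
    · rintro ⟨t, ⟨-, A, hA, hAt⟩, rfl⟩
      exact ⟨A, hA, hAt.symm⟩
  rw [traceCard, htraces, Set.ncard_image_of_injective _ coe_injective, Set.ncard_coe_finset]

lemma shatters_of_shatters_traceFinset [DecidableEq X] {𝒜 : Set (Set X)} {B s : Finset X}
    (hs : (traceFinset 𝒜 B).Shatters s) : Shatters 𝒜 s := by
  obtain ⟨u, hu, hsu⟩ := hs.exists_superset
  have hsB : (s : Set X) ⊆ B := coe_subset.2 (hsu.trans (mem_traceFinset.1 hu).1)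
  intro t ht
  obtain ⟨v, hv, hsv⟩ := hs ht
  obtain ⟨-, A, hA, hAv⟩ := mem_traceFinset.1 hv
  refine ⟨A, hA, ?_⟩
  calc A ∩ (s : Set X) = (s : Set X) ∩ (A ∩ B) := by
        rw [Set.inter_comm, ← Set.inter_assoc,
          Set.inter_eq_left.2 (Set.inter_subset_left.trans hsB)]
    _ = t := by rw [hAv, ← coe_inter, hsv]

lemma Shatters.card_le_VCdim {𝒜 : Set (Set X)} {s : Finset X} (hs : Shatters 𝒜 s) :
    (#s : ℕ∞) ≤ VCdim 𝒜 :=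
  le_iSup₂ (f := fun (B : Finset X) (_ : Shatters 𝒜 B) ↦ (#B : ℕ∞)) s hs

lemma vcDim_traceFinset_le_VCdim [DecidableEq X] (𝒜 : Set (Set X)) (B : Finset X) :
    ((traceFinset 𝒜 B).vcDim : ℕ∞) ≤ VCdim 𝒜 := by
  rw [vcDim, apply_sup_eq_sup_comp_of_linearOrder _ Nat.mono_cast rfl]
  exact Finset.sup_le fun s hs ↦
    (shatters_of_shatters_traceFinset (mem_shatterer.1 hs)).card_le_VCdim

/-- Sauer–Shelah: if the VC dimension is a finite `d`, the number of traces on any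
finite `B` is at most `∑_{i=0}^d (|B| choose i)`. -/
theorem stmt_0 (𝒜 : Set (Set X)) (d : ℕ) (hd : VCdim 𝒜 = (d : ℕ∞)) (B : Finset X) :
    traceCard 𝒜 B ≤ ∑ i ∈ Finset.range (d + 1), (B.card).choose i := by
  classical
  rw [traceCard_eq_card_traceFinset]
  refine card_le_sum_choose_of_vcDim_le (fun t ht ↦ (mem_traceFinset.1 ht).1) ?_
  exact_mod_cast hd ▸ vcDim_traceFinset_le_VCdim 𝒜 B
end

section
/- (Massart's Lemma) Let A be a finite nonempty set of vectors in ℝ^k, each of norm at most r, and let ā be their mean (or any fixed centering). Then the Rademacher complexity E_σ[ (1/k) · max_{a ∈ A} ∑_{i=1}^k σ_i a_i ], where σ_i are independent uniform ±1 random variables, is at most (r/k)·√(2·log|A|). -/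
open Finset

/-- The Rademacher complexity of a finite set `A ⊆ ℝ^k`: the average over all sign
vectors `σ ∈ {−1,1}^k` of `(1/k)·max_{a ∈ A} ⟨σ, a⟩`. -/
noncomputable def radComplexity (k : ℕ) (A : Finset (Fin k → ℝ)) (hA : A.Nonempty) : ℝ :=
  (1 / 2 ^ k) * ∑ σ : Fin k → Bool,
    (1 / (k : ℝ)) * A.sup' hA (fun a => ∑ i, (if σ i then (1:ℝ) else -1) * a i)

/-!
Each `⟨σ, a⟩` is sub-Gaussian with variance proxy `‖a‖² ≤ r²`: its moment generating function
factors as `∏ᵢ cosh (t aᵢ) ≤ exp (t² ‖a‖² / 2)`. Jensen's inequality and a union bound over `A`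
give `exp (t 𝔼 max) ≤ |A| exp (t² r² / 2)` for every `t > 0`, and optimizing in `t` yields
`𝔼 max ≤ r √(2 log |A|)`.
-/

open Real
open scoped BigOperators

theorem Fintype.prod_expect {ι : Type*} {κ : ι → Type*} [DecidableEq ι] [Fintype ι]
    [∀ i, Fintype (κ i)] {K : Type*} [Semifield K] [CharZero K] (f : ∀ i, κ i → K) :
    ∏ i, 𝔼 j, f i j = 𝔼 x : ∀ i, κ i, ∏ i, f i (x i) := by
  simp only [Fintype.expect_eq_sum_div_card, prod_div_distrib, Fintype.prod_sum, Fintype.card_pi,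
    Nat.cast_prod]

theorem Real.exp_expect_le_expect_exp {ι : Type*} {s : Finset ι} (hs : s.Nonempty) (f : ι → ℝ) :
    exp (𝔼 i ∈ s, f i) ≤ 𝔼 i ∈ s, exp (f i) := by
  have hcard : (#s : ℝ) ≠ 0 := by exact_mod_cast hs.card_pos.ne'
  have := convexOn_exp.map_sum_le (t := s) (w := fun _ => (#s : ℝ)⁻¹) (p := f)
    (fun _ _ => by positivity) (by simp [hcard]) (fun _ _ => Set.mem_univ _)
  simpa only [expect_eq_sum_div_card, smul_eq_mul, ← mul_sum, div_eq_inv_mul] using this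

theorem Real.exp_mul_sup'_le_sum_exp {ι : Type*} {s : Finset ι} (hs : s.Nonempty) (f : ι → ℝ)
    (t : ℝ) : exp (t * s.sup' hs f) ≤ ∑ i ∈ s, exp (t * f i) := by
  obtain ⟨i, hi, hmax⟩ := s.exists_mem_eq_sup' hs f
  rw [hmax]
  exact single_le_sum (f := fun i => exp (t * f i)) (fun _ _ => (exp_pos _).le) hi

theorem le_sqrt_of_forall_mul_le_add_sq_mul {E L c : ℝ} (hc : 0 ≤ c)
    (h : ∀ t > 0, t * E ≤ L + t ^ 2 * c / 2) : E ≤ √(2 * c * L) := by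
  by_contra! hE
  have hE0 : 0 < E := (sqrt_nonneg _).trans_lt hE
  rcases hc.eq_or_lt with rfl | hc
  · have := h ((|L| + 1) / E) (by positivity)
    rw [div_mul_cancel₀ _ hE0.ne'] at this
    linarith [le_abs_self L]
  · -- `t = E / c` minimizes `L + t ^ 2 * c / 2 - t * E`
    have hdisc : 2 * c * L < E ^ 2 := (sqrt_lt' hE0).1 hE
    have := h (E / c) (by positivity)
    field_simp at this
    nlinarith

theorem mul_expect_sup'_le_log_card_add {Ω ι : Type*} [Fintype Ω] [Nonempty Ω] {A : Finset ι}
    (hA : A.Nonempty) (X : ι → Ω → ℝ) {t c : ℝ}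
    (hX : ∀ a ∈ A, 𝔼 ω, exp (t * X a ω) ≤ exp (t ^ 2 * c / 2)) :
    t * 𝔼 ω, A.sup' hA (X · ω) ≤ log #A + t ^ 2 * c / 2 := by
  have hmgf : exp (t * 𝔼 ω, A.sup' hA (X · ω)) ≤ #A * exp (t ^ 2 * c / 2) :=
    calc exp (t * 𝔼 ω, A.sup' hA (X · ω))
        = exp (𝔼 ω, t * A.sup' hA (X · ω)) := by rw [mul_expect]
      _ ≤ 𝔼 ω, exp (t * A.sup' hA (X · ω)) := exp_expect_le_expect_exp univ_nonempty _
      _ ≤ 𝔼 ω, ∑ a ∈ A, exp (t * X a ω) :=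
          expect_le_expect fun ω _ => exp_mul_sup'_le_sum_exp hA (X · ω) t
      _ = ∑ a ∈ A, 𝔼 ω, exp (t * X a ω) := expect_sum_comm _ _ _
      _ ≤ ∑ _a ∈ A, exp (t ^ 2 * c / 2) := sum_le_sum hX
      _ = #A * exp (t ^ 2 * c / 2) := by rw [sum_const, nsmul_eq_mul]
  have hcard : (0 : ℝ) < #A := by exact_mod_cast hA.card_pos
  rwa [← le_log_iff_exp_le (by positivity), log_mul hcard.ne' (exp_pos _).ne', log_exp] at hmgf

theorem expect_sup'_le_sqrt_two_mul_log_card {Ω ι : Type*} [Fintype Ω] [Nonempty Ω] {A : Finset ι}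
    (hA : A.Nonempty) (X : ι → Ω → ℝ) {c : ℝ} (hc : 0 ≤ c)
    (hX : ∀ t > 0, ∀ a ∈ A, 𝔼 ω, exp (t * X a ω) ≤ exp (t ^ 2 * c / 2)) :
    𝔼 ω, A.sup' hA (X · ω) ≤ √(2 * c * log #A) :=
  le_sqrt_of_forall_mul_le_add_sq_mul hc fun t ht => mul_expect_sup'_le_log_card_add hA X (hX t ht)

theorem expect_exp_mul_rademacher_sum_le {ι : Type*} [DecidableEq ι] [Fintype ι] (a : ι → ℝ)
    (t : ℝ) :
    𝔼 σ : ι → Bool, exp (t * ∑ i, (if σ i then 1 else -1) * a i)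
      ≤ exp (t ^ 2 * (∑ i, a i ^ 2) / 2) := by
  have hcosh (x : ℝ) : 𝔼 b : Bool, exp ((if b then 1 else -1) * x) = cosh x := by
    rw [Fintype.expect_eq_sum_div_card, Fintype.sum_bool]
    simp [cosh_eq]
  calc 𝔼 σ : ι → Bool, exp (t * ∑ i, (if σ i then 1 else -1) * a i)
      = ∏ i, cosh (t * a i) := by
        simp_rw [← hcosh, Fintype.prod_expect, mul_sum, exp_sum, mul_left_comm t]
    _ ≤ ∏ i, exp ((t * a i) ^ 2 / 2) :=
        prod_le_prod (fun _ _ => (cosh_pos _).le) fun i _ => cosh_le_exp_half_sq _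
    _ = exp (t ^ 2 * (∑ i, a i ^ 2) / 2) := by
        rw [← exp_sum, mul_sum, sum_div]
        simp_rw [mul_pow]

theorem stmt_12_general (k : ℕ) (A : Finset (Fin k → ℝ)) (hA : A.Nonempty)
    (r : ℝ) (hr : ∀ a ∈ A, Real.sqrt (∑ i, a i ^ 2) ≤ r) :
    radComplexity k A hA ≤ (r / k) * Real.sqrt (2 * Real.log A.card) := by
  have hr0 : 0 ≤ r := (sqrt_nonneg _).trans (hr _ hA.choose_spec)
  have hsubgaussian : ∀ t > 0, ∀ a ∈ A, 𝔼 σ : Fin k → Bool,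
      exp (t * ∑ i, (if σ i then 1 else -1) * a i) ≤ exp (t ^ 2 * r ^ 2 / 2) := by
    intro t _ a ha
    refine (expect_exp_mul_rademacher_sum_le a t).trans (exp_le_exp.2 ?_)
    gcongr
    exact (sqrt_le_left hr0).1 (hr a ha)
  calc radComplexity k A hA
      = (1 / k) * 𝔼 σ : Fin k → Bool, A.sup' hA fun a => ∑ i, (if σ i then 1 else -1) * a i := by
        rw [radComplexity, ← mul_sum, Fintype.expect_eq_sum_div_card, Fintype.card_fun,
          Fintype.card_bool, Fintype.card_fin]
        push_cast
        ring
    _ ≤ (1 / k) * √(2 * r ^ 2 * log #A) := by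
        gcongr
        exact expect_sup'_le_sqrt_two_mul_log_card hA _ (sq_nonneg r) hsubgaussian
    _ = (r / k) * √(2 * log #A) := by
        rw [mul_right_comm, sqrt_mul (by positivity), sqrt_mul (by positivity), sqrt_sq hr0]
        ring

/-- Massart's Lemma: if every vector of the finite nonempty `A ⊆ ℝ^k` has norm at most
`r`, then the Rademacher complexity of `A` is at most `(r/k)·√(2·log |A|)`. -/
theorem stmt_12 (k : ℕ) (hk : 0 < k) (A : Finset (Fin k → ℝ)) (hA : A.Nonempty)
    (r : ℝ) (hr : ∀ a ∈ A, Real.sqrt (∑ i, a i ^ 2) ≤ r) :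
    radComplexity k A hA ≤ (r / k) * Real.sqrt (2 * Real.log A.card) :=
  stmt_12_general k A hA r hr
end
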